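/- Let h', h'' be independent exponential random variables with unit mean, θ ≥ 0 and μ ∈ [0,1]. Define V₂ = min(h',h'') − θμ·max(h',h''). Then for v > 0, the CDF of V₂ is F(v) = 1 − ((1−θμ)/(1+θμ))e^{−2v/(1−θμ)} if 0 ≤ θμ < 1, and F(v) = 1 identically if θμ ≥ 1. -/

import Mathlib

/-!
Write `a = θμ`. Up to the null diagonal, the event `V₂ > v` is the union of two mirror images,
according to which of `h'`, `h''` is smaller. On the half where `h'' ≤ h' = x` it says
`h'' ∈ (v + a x, x]`, which for `x ≥ 0` has probability `(e^{-(v + a x)} - e^{-x})⁺`. This is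
never positive when `a ≥ 1`, and for `a < 1` it is positive exactly when `x > v / (1 - a)`;
integrating it against `e^{-x}` there gives `(1 - a) / (2 (1 + a)) · e^{-2v/(1 - a)}`.
-/

open MeasureTheory ProbabilityTheory Real Set

namespace ProbabilityTheory

lemma expMeasure_eq_withDensity (r : ℝ) :
    expMeasure r = volume.withDensity (exponentialPDF r) := rfl

lemma measurable_exponentialPDF (r : ℝ) : Measurable (exponentialPDF r) :=
  (measurable_exponentialPDFReal r).ennreal_ofReal

instance (r : ℝ) : NullSingletonClass (expMeasure r) :=
  inferInstanceAs (NullSingletonClass (volume.withDensity _))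

lemma ae_nonneg_expMeasure (r : ℝ) : ∀ᵐ x ∂expMeasure r, 0 ≤ x := by
  rw [expMeasure_eq_withDensity, ae_withDensity_iff (measurable_exponentialPDF r)]
  exact ae_of_all _ fun x hx => not_lt.mp fun hneg => hx (exponentialPDF_of_neg hneg)

lemma expMeasure_Ioc {r c : ℝ} (hr : 0 < r) (hc : 0 ≤ c) (d : ℝ) :
    expMeasure r (Ioc c d) = ENNReal.ofReal (exp (-(r * c)) - exp (-(r * d))) := by
  have := isProbabilityMeasure_expMeasure hr
  rw [← measure_cdf (expMeasure r), StieltjesFunction.measure_Ioc, cdf_expMeasure_eq hr,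
    cdf_expMeasure_eq hr, if_pos hc]
  split_ifs with hd
  · ring_nf
  · have hc' : exp (-(r * c)) ≤ 1 := exp_le_one_iff.mpr (by nlinarith)
    have hd' : 1 ≤ exp (-(r * d)) := one_le_exp_iff.mpr (by nlinarith)
    rw [ENNReal.ofReal_of_nonpos (by linarith), ENNReal.ofReal_of_nonpos (by linarith)]

lemma setLIntegral_expMeasure {r : ℝ} {s : Set ℝ} (hs : MeasurableSet s) (hs₀ : s ⊆ Ici 0)
    {f : ℝ → ENNReal} (hf : Measurable f) :
    ∫⁻ x in s, f x ∂expMeasure r = ∫⁻ x in s, ENNReal.ofReal (r * exp (-(r * x))) * f x := by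
  rw [expMeasure_eq_withDensity, restrict_withDensity hs,
    lintegral_withDensity_eq_lintegral_mul _ (measurable_exponentialPDF r) hf]
  exact setLIntegral_congr_fun hs fun x hx => by
    simp only [Pi.mul_apply, exponentialPDF_of_nonneg (hs₀ hx)]

end ProbabilityTheory

namespace MeasureTheory.Measure

variable {α : Type*} [MeasurableSpace α] (ν : Measure α) [SFinite ν] [NullSingletonClass ν]

lemma prod_self_diagonal [MeasurableEq α] : ν.prod ν (diagonal α) = 0 := by
  rw [prod_apply measurableSet_diagonal]
  have hslice (x : α) : Prod.mk x ⁻¹' diagonal α = {x} := by ext; simp [eq_comm]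
  simp [hslice]

lemma prod_self_union_preimage_swap [LinearOrder α] [MeasurableEq α] {A : Set (α × α)}
    (hA : MeasurableSet A) (hA_le : A ⊆ {p | p.2 ≤ p.1}) :
    ν.prod ν (A ∪ Prod.swap ⁻¹' A) = 2 * ν.prod ν A := by
  have hinter : ν.prod ν (A ∩ Prod.swap ⁻¹' A) = 0 :=
    measure_mono_null (fun p hp => le_antisymm (hA_le hp.2) (hA_le hp.1))
      (prod_self_diagonal ν)
  have hswap : ν.prod ν (Prod.swap ⁻¹' A) = ν.prod ν A := by
    rw [← map_apply measurable_swap hA, prod_swap]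
  rw [← add_zero (ν.prod ν _), ← hinter, measure_union_add_inter _ (hA.preimage measurable_swap),
    hswap, two_mul]

end MeasureTheory.Measure

lemma setOf_lt_min_sub_mul_max (a v : ℝ) :
    {p : ℝ × ℝ | v < min p.1 p.2 - a * max p.1 p.2} =
      {p | p.2 ≤ p.1 ∧ v + a * p.1 < p.2} ∪ Prod.swap ⁻¹' {p | p.2 ≤ p.1 ∧ v + a * p.1 < p.2} := by
  ext ⟨x, y⟩
  simp only [mem_ofPred_eq, mem_union, mem_preimage, Prod.fst_swap, Prod.snd_swap]
  rcases le_total y x with h | h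
  · rw [min_eq_right h, max_eq_left h]
    grind
  · rw [min_eq_left h, max_eq_right h]
    grind

lemma measurableSet_setOf_le_and_lt (a v : ℝ) :
    MeasurableSet {p : ℝ × ℝ | p.2 ≤ p.1 ∧ v + a * p.1 < p.2} :=
  (measurableSet_le measurable_snd measurable_fst).inter
    (measurableSet_lt (by fun_prop) measurable_snd)

lemma prod_setOf_le_and_lt (ν : Measure ℝ) [SFinite ν] (a v : ℝ) :
    ν.prod ν {p | p.2 ≤ p.1 ∧ v + a * p.1 < p.2} = ∫⁻ x, ν (Ioc (v + a * x) x) ∂ν := by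
  rw [Measure.prod_apply (measurableSet_setOf_le_and_lt a v)]
  congr! with x
  ext y
  simp [and_comm]

lemma measure_lt_min_sub_mul_max_of_indepFun {Ω : Type*} [MeasurableSpace Ω] {P : Measure Ω}
    [IsFiniteMeasure P] {X Y : Ω → ℝ} (hX : Measurable X) (hY : Measurable Y)
    (hXY : IndepFun X Y P) {ν : Measure ℝ} [SFinite ν] [NullSingletonClass ν]
    (hXν : P.map X = ν) (hYν : P.map Y = ν) (a v : ℝ) :
    P {ω | v < min (X ω) (Y ω) - a * max (X ω) (Y ω)} = 2 * ∫⁻ x, ν (Ioc (v + a * x) x) ∂ν := by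
  have hlaw : P.map (fun ω => (X ω, Y ω)) = ν.prod ν := by
    have := (indepFun_iff_map_prod_eq_prod_map_map hX.aemeasurable hY.aemeasurable).mp hXY
    rwa [hXν, hYν] at this
  have hmeas := measurableSet_setOf_le_and_lt a v
  rw [← prod_setOf_le_and_lt, ← Measure.prod_self_union_preimage_swap ν hmeas fun p hp => hp.1,
    ← setOf_lt_min_sub_mul_max, ← hlaw, Measure.map_apply (hX.prodMk hY)]
  · rfl
  · rw [setOf_lt_min_sub_mul_max]
    exact hmeas.union (hmeas.preimage measurable_swap)

lemma exp_neg_add_mul_le_exp_neg_iff {a : ℝ} (ha : a < 1) (v x : ℝ) :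
    exp (-(v + a * x)) ≤ exp (-x) ↔ x ≤ v / (1 - a) := by
  rw [exp_le_exp, le_div_iff₀ (by linarith)]
  constructor <;> intro <;> linarith

lemma exp_neg_mul_sub_exp_neg (a v x : ℝ) :
    exp (-x) * (exp (-(v + a * x)) - exp (-x)) = exp (-v) * exp (-(1 + a) * x) - exp (-2 * x) := by
  rw [mul_sub, ← exp_add, ← exp_add, ← exp_add]
  ring_nf

lemma integrableOn_exp_neg_mul_sub {a : ℝ} (ha : -1 < a) (v c : ℝ) :
    IntegrableOn (fun x => exp (-x) * (exp (-(v + a * x)) - exp (-x))) (Ioi c) := by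
  simp_rw [exp_neg_mul_sub_exp_neg]
  exact ((integrableOn_exp_mul_Ioi (by linarith) c).const_mul _).sub
    (integrableOn_exp_mul_Ioi (by norm_num) c)

lemma integral_Ioi_exp_neg_mul_sub {a : ℝ} (ha₀ : -1 < a) (ha₁ : a < 1) (v : ℝ) :
    ∫ x in Ioi (v / (1 - a)), exp (-x) * (exp (-(v + a * x)) - exp (-x)) =
      (1 - a) / (2 * (1 + a)) * exp (-2 * v / (1 - a)) := by
  have h1a : 1 - a ≠ 0 := by linarith
  have h1a' : 1 + a ≠ 0 := by linarith
  set b := v / (1 - a)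
  have hv : v = (1 - a) * b := (mul_div_cancel₀ v h1a).symm
  simp_rw [exp_neg_mul_sub_exp_neg]
  rw [integral_sub ((integrableOn_exp_mul_Ioi (by linarith) b).const_mul _)
      (integrableOn_exp_mul_Ioi (by norm_num) b), integral_const_mul,
    integral_exp_mul_Ioi (by linarith), integral_exp_mul_Ioi (by norm_num)]
  have hexp : exp (-((1 - a) * b)) * exp (-(1 + a) * b) = exp (-2 * b) := by
    rw [← exp_add]; ring_nf
  rw [hv, show -2 * ((1 - a) * b) / (1 - a) = -2 * b by field_simp]
  rw [neg_div_neg_eq, ← mul_div_assoc, hexp, neg_div_neg_eq]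
  field_simp
  ring

lemma lintegral_measure_Ioc_eq_zero_of_one_le {ν ρ : Measure ℝ} (hν : ∀ᵐ x ∂ν, 0 ≤ x)
    {a v : ℝ} (ha : 1 ≤ a) (hv : 0 ≤ v) : ∫⁻ x, ρ (Ioc (v + a * x) x) ∂ν = 0 := by
  refine (lintegral_congr_ae ?_).trans lintegral_zero
  filter_upwards [hν] with x hx
  rw [Ioc_eq_empty (by nlinarith), measure_empty]

lemma lintegral_expMeasure_Ioc_of_lt_one {a v : ℝ} (ha₀ : 0 ≤ a) (ha₁ : a < 1) (hv : 0 ≤ v) :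
    ∫⁻ x, expMeasure 1 (Ioc (v + a * x) x) ∂expMeasure 1 =
      ENNReal.ofReal ((1 - a) / (2 * (1 + a)) * exp (-2 * v / (1 - a))) := by
  set g : ℝ → ℝ := fun x => exp (-(v + a * x)) - exp (-x)
  have hg_pos (x : ℝ) : 0 < g x ↔ v / (1 - a) < x := by
    rw [sub_pos, ← not_le, exp_neg_add_mul_le_exp_neg_iff ha₁, not_le]
  calc ∫⁻ x, expMeasure 1 (Ioc (v + a * x) x) ∂expMeasure 1
      = ∫⁻ x, ENNReal.ofReal (g x) ∂expMeasure 1 := lintegral_congr_ae <| by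
        filter_upwards [ae_nonneg_expMeasure 1] with x hx
        simpa only [one_mul] using expMeasure_Ioc one_pos (by positivity : 0 ≤ v + a * x) x
    _ = ∫⁻ x in Ioi (v / (1 - a)), ENNReal.ofReal (g x) ∂expMeasure 1 :=
        (setLIntegral_eq_of_support_subset fun x hx =>
          (hg_pos x).mp (ENNReal.ofReal_pos.mp (pos_iff_ne_zero.mpr hx))).symm
    _ = ∫⁻ x in Ioi (v / (1 - a)), ENNReal.ofReal (exp (-x) * g x) := by
        rw [setLIntegral_expMeasure measurableSet_Ioi
          (Ioi_subset_Ici (div_nonneg hv (by linarith))) (by fun_prop)]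
        simp_rw [ENNReal.ofReal_mul (exp_pos _).le, one_mul]
    _ = ENNReal.ofReal (∫ x in Ioi (v / (1 - a)), exp (-x) * g x) :=
        (ofReal_integral_eq_lintegral_ofReal (integrableOn_exp_neg_mul_sub (by linarith) v _)
          (ae_restrict_of_forall_mem measurableSet_Ioi fun x hx =>
            mul_nonneg (exp_pos _).le ((hg_pos x).mpr hx).le)).symm
    _ = _ := by rw [integral_Ioi_exp_neg_mul_sub (by linarith) ha₁ v]

theorem cdf_V2_general {Ω : Type*} [MeasureSpace Ω] [IsProbabilityMeasure (ℙ : Measure Ω)]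
    (h' h'' : Ω → ℝ) (hm' : Measurable h') (hm'' : Measurable h'')
    (hind : IndepFun h' h'' ℙ)
    (hd' : Measure.map h' ℙ = expMeasure 1)
    (hd'' : Measure.map h'' ℙ = expMeasure 1)
    (θ μ : ℝ) (hθ : 0 ≤ θ) (hμ0 : 0 ≤ μ) (v : ℝ) (hv : 0 < v) :
    (ℙ {ω | min (h' ω) (h'' ω) - θ * μ * max (h' ω) (h'' ω) ≤ v}).toReal =
      if θ * μ < 1 then
        1 - ((1 - θ * μ) / (1 + θ * μ)) * Real.exp (-2 * v / (1 - θ * μ))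
      else 1 := by
  have := isProbabilityMeasure_expMeasure one_pos
  set a := θ * μ
  have ha : 0 ≤ a := mul_nonneg hθ hμ0
  have hcompl : {ω | min (h' ω) (h'' ω) - a * max (h' ω) (h'' ω) ≤ v} =
      {ω | v < min (h' ω) (h'' ω) - a * max (h' ω) (h'' ω)}ᶜ := by
    ext; simp
  rw [← measureReal_def, hcompl, probReal_compl_eq_one_sub (measurableSet_lt (by fun_prop)
    (by fun_prop)), measureReal_def,
    measure_lt_min_sub_mul_max_of_indepFun hm' hm'' hind hd' hd'' a v]
  split_ifs with ha₁
  · rw [lintegral_expMeasure_Ioc_of_lt_one ha ha₁ hv.le, ENNReal.toReal_mul, ENNReal.toReal_ofNat,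
      ENNReal.toReal_ofReal (mul_nonneg (div_nonneg (by linarith) (by linarith)) (exp_pos _).le)]
    field_simp
  · rw [lintegral_measure_Ioc_eq_zero_of_one_le (ae_nonneg_expMeasure 1) (not_lt.mp ha₁) hv.le]
    simp

/-- CDF of `V₂ = min(h',h'') − θμ·max(h',h'')` for i.i.d. unit-mean exponential `h', h''`. -/
theorem cdf_V2 {Ω : Type*} [MeasureSpace Ω] [IsProbabilityMeasure (ℙ : Measure Ω)]
    (h' h'' : Ω → ℝ) (hm' : Measurable h') (hm'' : Measurable h'')
    (hind : IndepFun h' h'' ℙ)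
    (hd' : Measure.map h' ℙ = expMeasure 1)
    (hd'' : Measure.map h'' ℙ = expMeasure 1)
    (θ μ : ℝ) (hθ : 0 ≤ θ) (hμ0 : 0 ≤ μ) (hμ1 : μ ≤ 1) (v : ℝ) (hv : 0 < v) :
    (ℙ {ω | min (h' ω) (h'' ω) - θ * μ * max (h' ω) (h'' ω) ≤ v}).toReal =
      if θ * μ < 1 then
        1 - ((1 - θ * μ) / (1 + θ * μ)) * Real.exp (-2 * v / (1 - θ * μ))
      else 1 :=
  cdf_V2_general h' h'' hm' hm'' hind hd' hd'' θ μ hθ hμ0 v hv
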